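/- Let G = (V, E) be a nontrivial m-uniform hypergraph with |V| = n, where m ≥ 3 and n ≥ m, let ω(G) be its coclique number, and let A be its adjacency tensor. If k is a positive integer such that the tensor k^{m−1}(A + I) − E_tensor is copositive, then ω(G) ≤ k. -/

import Mathlib

open scoped BigOperators

/-- `A x^m`: the homogeneous form of an `m`-th order `n`-dimensional tensor. -/
def tApply {m n : ℕ} (A : (Fin m → Fin n) → ℝ) (x : Fin n → ℝ) : ℝ :=
  ∑ i : Fin m → Fin n, A i * ∏ t, x (i t)

/-- A tensor is symmetric if its entries are invariant under permutations of indices. -/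
def IsSymT {m n : ℕ} (A : (Fin m → Fin n) → ℝ) : Prop :=
  ∀ (σ : Equiv.Perm (Fin m)) (i : Fin m → Fin n), A (i ∘ σ) = A i

/-- Copositivity: `A x^m ≥ 0` for all `x` in the nonnegative orthant. -/
def Copositive {m n : ℕ} (A : (Fin m → Fin n) → ℝ) : Prop :=
  ∀ x : Fin n → ℝ, (∀ j, 0 ≤ x j) → 0 ≤ tApply A x

/-- A coclique of an `m`-uniform hypergraph with edge set `E`: a set of vertices no
`m`-element subset of which is an edge. -/
def IsCoclique {n : ℕ} (m : ℕ) (E : Finset (Finset (Fin n))) (S : Finset (Fin n)) : Prop :=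
  ∀ T : Finset (Fin n), T ⊆ S → T.card = m → T ∉ E

/-- The identity tensor: entry `1` on the diagonal, `0` elsewhere. -/
def idT (m n : ℕ) : (Fin m → Fin n) → ℝ :=
  fun i => if ∀ s t, i s = i t then 1 else 0

/-- The adjacency tensor of an `m`-uniform hypergraph with edge set `E`:
entry `1/(m-1)!` if the index set is an edge, `0` otherwise. -/
noncomputable def adjTensor (m n : ℕ) (E : Finset (Finset (Fin n))) : (Fin m → Fin n) → ℝ :=
  fun i => if Finset.image i Finset.univ ∈ E then 1 / (Nat.factorial (m - 1) : ℝ) else 0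

/-!
Evaluate the copositive form at the indicator vector `x` of a maximum coclique `S`, with
`ω = |S|`. Since no edge lies inside `S`, the adjacency part vanishes; the identity part gives
`∑ xⱼ^m = ω` and the all-ones part gives `(∑ xⱼ)^m = ω^m`. Copositivity thus reads
`k^(m-1) ω - ω^m ≥ 0`, i.e. `ω ≤ k`.
-/

section TensorForm

variable {m n : ℕ}

theorem tApply_add (A B : (Fin m → Fin n) → ℝ) (x : Fin n → ℝ) :
    tApply (A + B) x = tApply A x + tApply B x := by
  simp only [tApply, Pi.add_apply, add_mul, Finset.sum_add_distrib]

theorem tApply_sub (A B : (Fin m → Fin n) → ℝ) (x : Fin n → ℝ) :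
    tApply (A - B) x = tApply A x - tApply B x := by
  simp only [tApply, Pi.sub_apply, sub_mul, Finset.sum_sub_distrib]

theorem tApply_const_mul (c : ℝ) (A : (Fin m → Fin n) → ℝ) (x : Fin n → ℝ) :
    tApply (fun i => c * A i) x = c * tApply A x := by
  simp only [tApply, mul_assoc, Finset.mul_sum]

theorem tApply_one (x : Fin n → ℝ) : tApply (1 : (Fin m → Fin n) → ℝ) x = (∑ j, x j) ^ m := by
  simp only [tApply, Pi.one_apply, one_mul, Finset.sum_pow', Fintype.piFinset_univ]

theorem tApply_idT (hm : m ≠ 0) (x : Fin n → ℝ) : tApply (idT m n) x = ∑ j, x j ^ m := by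
  have : NeZero m := ⟨hm⟩
  have hconst : Finset.univ.filter (fun i : Fin m → Fin n => ∀ s t, i s = i t) =
      Finset.univ.image (fun j : Fin n => fun _ : Fin m => j) := by
    ext i
    simp only [Finset.mem_filter, Finset.mem_univ, true_and, Finset.mem_image]
    exact ⟨fun h => ⟨i 0, funext fun s => h 0 s⟩, fun ⟨j, hj⟩ s t => by simp [← hj]⟩
  simp only [tApply, idT, ite_mul, one_mul, zero_mul]
  rw [← Finset.sum_filter, hconst, Finset.sum_image fun j _ j' _ h => congrFun h 0]
  simp

end TensorForm

def indicatorVec {n : ℕ} (S : Finset (Fin n)) : Fin n → ℝ := fun j => if j ∈ S then 1 else 0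

section Indicator

variable {n : ℕ} (S : Finset (Fin n))

theorem indicatorVec_nonneg (j : Fin n) : 0 ≤ indicatorVec S j := by
  unfold indicatorVec; split_ifs <;> norm_num

theorem sum_indicatorVec : ∑ j, indicatorVec S j = S.card := by
  simp [indicatorVec, Finset.sum_ite_mem]

theorem indicatorVec_pow {m : ℕ} (hm : m ≠ 0) (j : Fin n) :
    indicatorVec S j ^ m = indicatorVec S j := by
  unfold indicatorVec; split_ifs <;> simp [hm]

theorem tApply_idT_indicatorVec {m : ℕ} (hm : m ≠ 0) :
    tApply (idT m n) (indicatorVec S) = S.card := by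
  simp only [tApply_idT hm, indicatorVec_pow S hm, sum_indicatorVec]

theorem tApply_one_indicatorVec {m : ℕ} :
    tApply (1 : (Fin m → Fin n) → ℝ) (indicatorVec S) = (S.card : ℝ) ^ m := by
  rw [tApply_one, sum_indicatorVec]

/-- A tuple contributes only if all its entries lie in `S`; its image is then a subset of `S`,
hence not an edge. -/
theorem tApply_adjTensor_indicatorVec_of_isCoclique {m : ℕ} {E : Finset (Finset (Fin n))}
    (hunif : ∀ e ∈ E, e.card = m) (hS : IsCoclique m E S) :
    tApply (adjTensor m n E) (indicatorVec S) = 0 := by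
  refine Finset.sum_eq_zero fun i _ => ?_
  by_cases hall : ∀ t, i t ∈ S
  · have hsub : Finset.univ.image i ⊆ S := by
      simpa [Finset.image_subset_iff] using hall
    have hi : Finset.univ.image i ∉ E := fun hi => hS _ hsub (hunif _ hi) hi
    simp [adjTensor, hi]
  · obtain ⟨t, ht⟩ := not_forall.mp hall
    rw [Finset.prod_eq_zero (Finset.mem_univ t) (by simp [indicatorVec, ht]), mul_zero]

end Indicator

theorem le_of_pow_le_pow_pred_mul {a b m : ℕ} (hm : 2 ≤ m) (h : a ^ m ≤ b ^ (m - 1) * a) :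
    a ≤ b := by
  rcases Nat.eq_zero_or_pos a with rfl | ha
  · exact Nat.zero_le b
  rw [← Nat.sub_add_cancel (by omega : 1 ≤ m), pow_succ] at h
  exact (Nat.pow_le_pow_iff_left (by omega)).mp (Nat.le_of_mul_le_mul_right h ha)

theorem stmt16_general (m n : ℕ) (hm : 3 ≤ m)
    (E : Finset (Finset (Fin n))) (hunif : ∀ e ∈ E, e.card = m)
    (ω : ℕ)
    (hω : IsGreatest {k | ∃ S : Finset (Fin n), IsCoclique m E S ∧ S.card = k} ω)
    (k : ℕ)
    (hcop : Copositive
      (fun i => (k : ℝ) ^ (m - 1) * (adjTensor m n E i + idT m n i) - 1)) :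
    ω ≤ k := by
  obtain ⟨S, hS, rfl⟩ := hω.1
  have hform := hcop (indicatorVec S) (indicatorVec_nonneg S)
  have hsplit : (fun i => (k : ℝ) ^ (m - 1) * (adjTensor m n E i + idT m n i) - 1) =
      (fun i => (k : ℝ) ^ (m - 1) * (adjTensor m n E + idT m n) i) - 1 := rfl
  rw [hsplit, tApply_sub, tApply_const_mul, tApply_add,
    tApply_adjTensor_indicatorVec_of_isCoclique S hunif hS,
    tApply_idT_indicatorVec S (by omega), tApply_one_indicatorVec, zero_add, sub_nonneg] at hform
  exact le_of_pow_le_pow_pred_mul (show 2 ≤ m by omega) (by exact_mod_cast hform)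

theorem stmt16 (m n : ℕ) (hm : 3 ≤ m) (hn : m ≤ n)
    (E : Finset (Finset (Fin n))) (hunif : ∀ e ∈ E, e.card = m) (hne : E.Nonempty)
    (ω : ℕ)
    (hω : IsGreatest {k | ∃ S : Finset (Fin n), IsCoclique m E S ∧ S.card = k} ω)
    (k : ℕ) (hk : 0 < k)
    (hcop : Copositive
      (fun i => (k : ℝ) ^ (m - 1) * (adjTensor m n E i + idT m n i) - 1)) :
    ω ≤ k :=
  stmt16_general m n hm E hunif ω hω k hcop
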